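/- Let a, b, c, d, e, f be positive integers. If g_a·g_b·g_c + g_a·g_b·g_d = g_c·g_e·g_f + g_d·g_e·g_f in ℚ⟦X⟧, then {a, b} = {e, f} as multisets. -/

import Mathlib

/-!
Since `g c + g d` has constant coefficient 2, it cancels in the domain `ℚ⟦X⟧`, leaving
`g a * g b = g e * g f`. The coefficients of `g a * g b` are nonnegative, so nothing cancels and its
first nonconstant term is at `X ^ min a b`: the product determines `min a b`. Cancelling
`g (min a b)` leaves `g (max a b) = g (max e f)`, and the same argument applied to the squares
recovers the maxima.
-/

/-- `g w = 1 + 2 ∑_{j ≥ 1} X^{jw}` in `ℚ⟦X⟧`. -/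
noncomputable def g (w : ℕ) : PowerSeries ℚ :=
  PowerSeries.mk fun n => if n = 0 then 1 else if w ∣ n then 2 else 0

open PowerSeries Finset

@[simp]
lemma coeff_g (w n : ℕ) : coeff n (g w) = if n = 0 then 1 else if w ∣ n then 2 else 0 :=
  coeff_mk _ _

@[simp]
lemma constantCoeff_g (w : ℕ) : constantCoeff (g w) = 1 := by
  simp [← coeff_zero_eq_constantCoeff_apply]

lemma coeff_g_nonneg (w n : ℕ) : 0 ≤ coeff n (g w) := by
  rw [coeff_g]; split_ifs <;> norm_num

lemma coeff_g_self {w : ℕ} (hw : 0 < w) : coeff w (g w) = 2 := by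
  simp [hw.ne']

lemma coeff_g_of_pos_of_lt {w n : ℕ} (hn : 0 < n) (hnw : n < w) : coeff n (g w) = 0 := by
  simp [hn.ne', Nat.not_dvd_of_pos_of_lt hn hnw]

lemma g_ne_zero (w : ℕ) : g w ≠ 0 := fun h => by
  simpa [h] using constantCoeff_g w

lemma g_add_g_ne_zero (c d : ℕ) : g c + g d ≠ 0 := fun h => by
  simpa using congrArg constantCoeff h

lemma g_min_mul_g_max (a b : ℕ) : g (min a b) * g (max a b) = g a * g b := by
  rcases le_total a b with hab | hab
  · rw [min_eq_left hab, max_eq_right hab]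
  · rw [min_eq_right hab, max_eq_left hab, mul_comm]

lemma coeff_g_mul_g_of_pos_of_lt_min {a b n : ℕ} (hn : 0 < n) (hna : n < min a b) :
    coeff n (g a * g b) = 0 := by
  rw [coeff_mul]
  refine sum_eq_zero fun ⟨i, j⟩ hij => ?_
  rw [HasAntidiagonal.mem_antidiagonal] at hij
  rcases Nat.eq_zero_or_pos i with rfl | hi
  · rw [coeff_g_of_pos_of_lt (w := b) (by omega) (by omega), mul_zero]
  · rw [coeff_g_of_pos_of_lt hi (by omega), zero_mul]

lemma two_le_coeff_g_mul_g {a : ℕ} (b : ℕ) (ha : 0 < a) : 2 ≤ coeff a (g a * g b) := by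
  rw [coeff_mul]
  have hterm : coeff a (g a) * coeff 0 (g b) = 2 := by
    rw [coeff_g_self ha, coeff_zero_eq_constantCoeff_apply, constantCoeff_g, mul_one]
  have hmem : ((a, 0) : ℕ × ℕ) ∈ antidiagonal a := by simp
  calc (2 : ℚ) = coeff a (g a) * coeff 0 (g b) := hterm.symm
    _ ≤ ∑ p ∈ antidiagonal a, coeff p.1 (g a) * coeff p.2 (g b) :=
      single_le_sum (f := fun p : ℕ × ℕ => coeff p.1 (g a) * coeff p.2 (g b))
        (fun _ _ => mul_nonneg (coeff_g_nonneg _ _) (coeff_g_nonneg _ _)) hmem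

lemma order_g_mul_g_sub_one {a b : ℕ} (ha : 0 < a) (hb : 0 < b) :
    (g a * g b - 1).order = min a b := by
  rw [order_eq_nat]
  have hmin : 0 < min a b := lt_min ha hb
  refine ⟨?_, fun n hn => ?_⟩
  · rw [map_sub, coeff_one, if_neg hmin.ne']
    rcases le_total a b with hab | hab
    · rw [min_eq_left hab]
      linarith [two_le_coeff_g_mul_g b ha]
    · rw [min_eq_right hab, mul_comm]
      linarith [two_le_coeff_g_mul_g a hb]
  · rcases Nat.eq_zero_or_pos n with rfl | hn0
    · simp
    · rw [map_sub, coeff_g_mul_g_of_pos_of_lt_min hn0 hn, coeff_one, if_neg hn0.ne', sub_zero]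

lemma min_eq_min_of_g_mul_g_eq {a b e f : ℕ} (ha : 0 < a) (hb : 0 < b) (he : 0 < e)
    (hf : 0 < f) (h : g a * g b = g e * g f) : min a b = min e f := by
  have horder := congrArg (fun p => (p - 1).order) h
  simp only [order_g_mul_g_sub_one ha hb, order_g_mul_g_sub_one he hf] at horder
  exact_mod_cast horder

lemma max_eq_max_of_g_mul_g_eq {a b e f : ℕ} (ha : 0 < a) (hb : 0 < b) (he : 0 < e)
    (hf : 0 < f) (h : g a * g b = g e * g f) : max a b = max e f := by
  have hmin := min_eq_min_of_g_mul_g_eq ha hb he hf h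
  rw [← g_min_mul_g_max a b, ← g_min_mul_g_max e f, hmin] at h
  have hmax := mul_left_cancel₀ (g_ne_zero _) h
  have hpos : 0 < max a b := lt_max_of_lt_left ha
  have hpos' : 0 < max e f := lt_max_of_lt_left he
  simpa using min_eq_min_of_g_mul_g_eq hpos hpos hpos' hpos' (congrArg (fun p => p * p) hmax)

lemma Multiset.pair_eq_min_max {α : Type*} [LinearOrder α] (a b : α) :
    ({a, b} : Multiset α) = {min a b, max a b} := by
  rcases le_total a b with hab | hab
  · rw [min_eq_left hab, max_eq_right hab]
  · rw [min_eq_right hab, max_eq_left hab, Multiset.pair_comm]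

theorem stmt_6_general (a b c d e f : ℕ) (ha : 0 < a) (hb : 0 < b)
    (he : 0 < e) (hf : 0 < f)
    (h : g a * g b * g c + g a * g b * g d = g c * g e * g f + g d * g e * g f) :
    ({a, b} : Multiset ℕ) = {e, f} := by
  have hcancel : g a * g b = g e * g f :=
    mul_left_cancel₀ (g_add_g_ne_zero c d) (by linear_combination h)
  rw [Multiset.pair_eq_min_max a b, Multiset.pair_eq_min_max e f,
    min_eq_min_of_g_mul_g_eq ha hb he hf hcancel, max_eq_max_of_g_mul_g_eq ha hb he hf hcancel]

theorem stmt_6 (a b c d e f : ℕ) (ha : 0 < a) (hb : 0 < b) (hc : 0 < c)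
    (hd : 0 < d) (he : 0 < e) (hf : 0 < f)
    (h : g a * g b * g c + g a * g b * g d = g c * g e * g f + g d * g e * g f) :
    ({a, b} : Multiset ℕ) = {e, f} :=
  stmt_6_general a b c d e f ha hb he hf h
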